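/- arXiv:1412.2796 — 4 statements merged into one kernel-verified Lean document; each statement's English description precedes it below -/
import Mathlib

section
/- Let (x_n) and (y_n) be real sequences with x_0, x_1 given, such that y_n = O(n^{1-ε}) for some ε > 0, and x_n = y_n + (1/n) · Σ_{j=0}^{n-1} (x_j + x_{n-1-j}) for all n > 1. Then the limit of x_n/n as n → ∞ exists and is finite. -/
/-!
Writing `S n = ∑_{j<n} x j`, the recurrence says `x n = y n + 2 S n / n`, and then the
normalized partial sums `b n = S n / (n (n + 1))` satisfy
`b (n + 1) = b n + y n / ((n + 1) (n + 2))`. These increments are `O(n^{-1-ε})`, hence summable,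
so `b n` converges, and `x n / n = y n / n + 2 b n (1 + 1 / n)` tends to twice its limit.
-/

open Filter Topology Finset Asymptotics

theorem exists_tendsto_of_summable_of_succ_eq_add {E : Type*} [AddCommGroup E]
    [TopologicalSpace E] [IsTopologicalAddGroup E] {b g : ℕ → E} {m : ℕ} (hg : Summable g)
    (hb : ∀ n ≥ m, b (n + 1) = b n + g n) : ∃ B, Tendsto b atTop (𝓝 B) := by
  have hshift : ∀ n, b (n + m) = b m + ∑ k ∈ range n, g (k + m) := by
    intro n
    induction n with
    | zero => simp
    | succ n ih => rw [add_right_comm, hb _ (Nat.le_add_left m n), ih, sum_range_succ, add_assoc]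
  obtain ⟨A, hA⟩ := (summable_nat_add_iff m).2 hg
  exact ⟨b m + A, (tendsto_add_atTop_iff_nat m).1 <|
    (tendsto_const_nhds.add hA.tendsto_sum_nat).congr fun n => (hshift n).symm⟩

theorem isBigO_mul_natCast_rpow {y w : ℕ → ℝ} {a c : ℝ} (hy : y =O[atTop] fun n => (n : ℝ) ^ a)
    (hw : w =O[atTop] fun n => (n : ℝ) ^ c) :
    (fun n => y n * w n) =O[atTop] fun n => (n : ℝ) ^ (a + c) := by
  refine (hy.mul hw).trans_eventuallyEq ?_
  filter_upwards [eventually_ge_atTop 1] with n hn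
  rw [Real.rpow_add (by exact_mod_cast hn)]

theorem tendsto_div_natCast_of_isBigO_rpow {y : ℕ → ℝ} {a : ℝ} (ha : a < 1)
    (hy : y =O[atTop] fun n => (n : ℝ) ^ a) :
    Tendsto (fun n => y n / n) atTop (𝓝 0) := by
  have hinv : (fun n : ℕ => (n : ℝ)⁻¹) =O[atTop] fun n => (n : ℝ) ^ (-1 : ℝ) :=
    (isBigO_refl _ _).congr_right fun n => (Real.rpow_neg_one _).symm
  refine (isBigO_mul_natCast_rpow hy hinv).trans_tendsto ?_
  rw [show a + -1 = -(1 - a) by ring]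
  exact (tendsto_rpow_neg_atTop (sub_pos.2 ha)).comp tendsto_natCast_atTop_atTop

theorem summable_div_add_one_mul_add_two_of_isBigO_rpow {y : ℕ → ℝ} {a : ℝ} (ha : a < 1)
    (hy : y =O[atTop] fun n => (n : ℝ) ^ a) :
    Summable fun n => y n / ((n + 1) * (n + 2)) := by
  have hinv : (fun n : ℕ => ((n + 1 : ℝ) * (n + 2))⁻¹) =O[atTop] fun n => (n : ℝ) ^ (-2 : ℝ) := by
    refine IsBigO.of_bound 1 ?_
    filter_upwards [eventually_ge_atTop 1] with n hn
    have hn : (1 : ℝ) ≤ n := by exact_mod_cast hn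
    rw [Real.rpow_neg (by positivity), Real.norm_of_nonneg (by positivity),
      Real.norm_of_nonneg (by positivity), one_mul, Real.rpow_two]
    gcongr
    nlinarith
  refine summable_of_isBigO_nat (Real.summable_nat_rpow.2 (by linarith : a + -2 < -1)) ?_
  simpa only [div_eq_mul_inv] using isBigO_mul_natCast_rpow hy hinv

theorem sum_range_succ_div_eq_add {x y : ℕ → ℝ} {n : ℕ} (hn : n ≠ 0)
    (hx : x n = y n + 2 * (∑ j ∈ range n, x j) / n) :
    (∑ j ∈ range (n + 1), x j) / (((n + 1 : ℕ) : ℝ) * ((n + 1 : ℕ) + 1)) =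
      (∑ j ∈ range n, x j) / (n * (n + 1)) + y n / ((n + 1) * (n + 2)) := by
  rw [sum_range_succ, hx]
  push_cast
  field_simp
  ring

theorem stmt_0 (x y : ℕ → ℝ)
    (hy : ∃ C > (0:ℝ), ∃ ε > (0:ℝ), ∀ n : ℕ, 1 ≤ n → |y n| ≤ C * (n : ℝ) ^ ((1:ℝ) - ε))
    (hrec : ∀ n : ℕ, 2 ≤ n →
      x n = y n + (1 / (n : ℝ)) * ∑ j ∈ Finset.range n, (x j + x (n - 1 - j))) :
    ∃ L : ℝ, Tendsto (fun n : ℕ => x n / (n : ℝ)) atTop (nhds L) := by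
  obtain ⟨C, -, ε, hε, hyC⟩ := hy
  have hyO : y =O[atTop] fun n => (n : ℝ) ^ (1 - ε) := by
    refine IsBigO.of_bound C ?_
    filter_upwards [eventually_ge_atTop 1] with n hn
    rw [Real.norm_eq_abs, Real.norm_of_nonneg (by positivity)]
    exact hyC n hn
  have hexp : 1 - ε < 1 := by linarith
  set S : ℕ → ℝ := fun n => ∑ j ∈ range n, x j
  have hx : ∀ n ≥ 2, x n = y n + 2 * S n / n := fun n hn => by
    rw [hrec n hn, sum_add_distrib, sum_range_reflect]
    ring
  obtain ⟨B, hB⟩ := exists_tendsto_of_summable_of_succ_eq_add (m := 2)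
    (b := fun n => S n / (n * (n + 1))) (summable_div_add_one_mul_add_two_of_isBigO_rpow hexp hyO)
    fun n hn => sum_range_succ_div_eq_add (by omega) (hx n hn)
  refine ⟨0 + 2 * B * (1 + 0), ((tendsto_div_natCast_of_isBigO_rpow hexp hyO).add
    ((hB.const_mul 2).mul (tendsto_const_nhds.add tendsto_one_div_atTop_nhds_zero_nat))).congr' ?_⟩
  filter_upwards [eventually_ge_atTop 2] with n hn
  have hn0 : (n : ℝ) ≠ 0 := by positivity
  rw [hx n hn]
  field_simp
end

section
/- Suppose a sequence of nonnegative reals (E_{n,ℓ}) indexed by n, with fixed integer ℓ ≥ 1, satisfies E_{n,ℓ} = 0 for n < ℓ, and E_{n,ℓ} = 1 + (1/n)·Σ_{j=0}^{n-1}(E_{j,ℓ} + E_{n-1-j,ℓ}) for n ≥ ℓ. Then for all n ≥ ℓ, E_{n,ℓ}/(n+1) = 2/(ℓ+1) − 1/(n+1). -/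
/-! Symmetrizing the sum turns the recurrence into `a n = 1 + (2 / n) * S n` with
`S n = ∑_{j<n} a j`. Induction from `S ℓ = 0` then gives `S n = n (n + 1) / (ℓ + 1) - n`,
and substituting back yields `a n = 2 (n + 1) / (ℓ + 1) - 1`. -/

open Finset

theorem sum_range_add_reflect {R : Type*} [CommSemiring R] (f : ℕ → R) (n : ℕ) :
    ∑ j ∈ range n, (f j + f (n - 1 - j)) = 2 * ∑ j ∈ range n, f j := by
  rw [sum_add_distrib, sum_range_reflect f n, two_mul]

section

variable {ℓ : ℕ} {a : ℕ → ℝ}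

theorem eq_of_sum_range_eq {n : ℕ} (hn : ℓ ≤ n)
    (hrec : a n = 1 + 2 / (n : ℝ) * ∑ j ∈ range n, a j)
    (hsum : ∑ j ∈ range n, a j = (n : ℝ) * ((n : ℝ) + 1) / ((ℓ : ℝ) + 1) - n) :
    a n = 2 * ((n : ℝ) + 1) / ((ℓ : ℝ) + 1) - 1 := by
  rw [hrec, hsum]
  rcases Nat.eq_zero_or_pos n with rfl | hpos
  · obtain rfl : ℓ = 0 := Nat.le_zero.mp hn
    norm_num
  · have : (n : ℝ) ≠ 0 := by positivity
    field_simp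
    ring

theorem sum_range_eq_of_rec (hzero : ∀ n, n < ℓ → a n = 0)
    (hrec : ∀ n, ℓ ≤ n → a n = 1 + 2 / (n : ℝ) * ∑ j ∈ range n, a j) {n : ℕ} (hn : ℓ ≤ n) :
    ∑ j ∈ range n, a j = (n : ℝ) * ((n : ℝ) + 1) / ((ℓ : ℝ) + 1) - n := by
  induction n, hn using Nat.le_induction with
  | base =>
    rw [sum_eq_zero fun j hj => hzero j (mem_range.mp hj)]
    field_simp
    ring
  | succ n hn ih =>
    rw [sum_range_succ, ih, eq_of_sum_range_eq hn (hrec n hn) ih]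
    push_cast
    field_simp
    ring

end

theorem stmt_7_general (ℓ : ℕ) (a : ℕ → ℝ)
    (hzero : ∀ n : ℕ, n < ℓ → a n = 0)
    (hrec : ∀ n : ℕ, ℓ ≤ n →
      a n = 1 + (1 / (n : ℝ)) * ∑ j ∈ Finset.range n, (a j + a (n - 1 - j))) :
    ∀ n : ℕ, ℓ ≤ n → a n / ((n : ℝ) + 1) = 2 / ((ℓ : ℝ) + 1) - 1 / ((n : ℝ) + 1) := by
  have hrec' : ∀ n, ℓ ≤ n → a n = 1 + 2 / (n : ℝ) * ∑ j ∈ range n, a j := fun n hn => by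
    rw [hrec n hn, sum_range_add_reflect, one_div_mul_eq_div, mul_div_right_comm]
  intro n hn
  rw [eq_of_sum_range_eq hn (hrec' n hn) (sum_range_eq_of_rec hzero hrec' hn)]
  field_simp

theorem stmt_7 (ℓ : ℕ) (hℓ : 1 ≤ ℓ) (a : ℕ → ℝ)
    (hnonneg : ∀ n, 0 ≤ a n)
    (hzero : ∀ n : ℕ, n < ℓ → a n = 0)
    (hrec : ∀ n : ℕ, ℓ ≤ n →
      a n = 1 + (1 / (n : ℝ)) * ∑ j ∈ Finset.range n, (a j + a (n - 1 - j))) :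
    ∀ n : ℕ, ℓ ≤ n → a n / ((n : ℝ) + 1) = 2 / ((ℓ : ℝ) + 1) - 1 / ((n : ℝ) + 1) :=
  stmt_7_general ℓ a hzero hrec
end

section
/- Let P(u,v) be a polynomial in two variables with rational coefficients, and substitute u = 1−x, v = log(1/(1−x)). Then the antiderivative ∫ (1−x)^b·(log(1/(1−x)))^c dx (for nonnegative integers b, c) is again of this polynomial form, and when the rational coefficients of the result are written in lowest terms, none of their denominators has a prime divisor exceeding b+1. -/
/-!
Write `L = log (1 / (1 - x))`, so `L' = 1 / (1 - x)`. Integration by parts gives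
`∫ (1 - x)^b L^(c+1) = -(1 - x)^(b+1) L^(c+1) / (b + 1) + (c + 1) / (b + 1) ∫ (1 - x)^b L^c`,
so by induction on `c` the antiderivative is a rational combination of terms `(1 - x)^β L^γ`
whose coefficients are products of fractions `k / (b + 1)`; their denominators divide powers
of `b + 1`, hence are `(b + 2)`-smooth.
-/

open Real

theorem Rat.den_intCast_div_natCast_dvd (k : ℤ) (n : ℕ) : ((k : ℚ) / n).den ∣ n := by
  have h := Rat.den_dvd k n
  rw [Rat.divInt_eq_div, Int.cast_natCast] at h
  exact Int.natCast_dvd_natCast.mp h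

lemma den_intCast_div_succ_mem_smoothNumbers (k : ℤ) (b : ℕ) :
    ((k : ℚ) / (b + 1)).den ∈ (b + 2).smoothNumbers :=
  Nat.mem_smoothNumbers_of_dvd (Nat.mem_smoothNumbers_of_lt b.succ_pos b.succ.lt_succ_self)
    (by exact_mod_cast Rat.den_intCast_div_natCast_dvd k (b + 1))

lemma Rat.den_mul_mem_smoothNumbers {q r : ℚ} {n : ℕ} (hq : q.den ∈ n.smoothNumbers)
    (hr : r.den ∈ n.smoothNumbers) : (q * r).den ∈ n.smoothNumbers :=
  Nat.mem_smoothNumbers_of_dvd (Nat.mul_mem_smoothNumbers hq hr) (Rat.mul_den_dvd q r)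

lemma hasDerivAt_log_one_div_one_sub {x : ℝ} (hx : x ≠ 1) :
    HasDerivAt (fun x => log (1 / (1 - x))) (1 / (1 - x)) x := by
  have h : HasDerivAt (fun x => 1 - x) (-1) x := by simpa using (hasDerivAt_id x).const_sub 1
  have hx' : 1 - x ≠ 0 := sub_ne_zero.mpr hx.symm
  simp only [one_div, log_inv]
  refine (h.log hx').neg.congr_deriv ?_
  field_simp

/-- At `c = 0` the truncated exponent `c - 1` is harmless, as it is multiplied by `c`. -/
lemma hasDerivAt_one_sub_pow_succ_mul_log_pow (b c : ℕ) {x : ℝ} (hx : x ≠ 1) :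
    HasDerivAt (fun x => (1 - x) ^ (b + 1) * log (1 / (1 - x)) ^ c)
      ((1 - x) ^ b * (c * log (1 / (1 - x)) ^ (c - 1) - (b + 1) * log (1 / (1 - x)) ^ c)) x := by
  have h : HasDerivAt (fun x => 1 - x) (-1) x := by simpa using (hasDerivAt_id x).const_sub 1
  have hx' : 1 - x ≠ 0 := sub_ne_zero.mpr hx.symm
  have hL := (hasDerivAt_log_one_div_one_sub hx).fun_pow c
  refine ((h.fun_pow (b + 1)).fun_mul hL).congr_deriv ?_
  field_simp
  push_cast
  ring

/-- The element `∑ aᵢ (1 - x)^bᵢ L^cᵢ` of the class PL, `L = log (1 / (1 - x))`. -/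
noncomputable def plSum {m : ℕ} (a : Fin m → ℚ) (bs cs : Fin m → ℕ) (x : ℝ) : ℝ :=
  ∑ i, (a i : ℝ) * (1 - x) ^ bs i * log (1 / (1 - x)) ^ cs i

lemma plSum_cons {m : ℕ} (a₀ : ℚ) (b₀ c₀ : ℕ) (a : Fin m → ℚ) (bs cs : Fin m → ℕ) (r : ℚ) :
    plSum (Fin.cons a₀ fun i => r * a i) (Fin.cons b₀ bs) (Fin.cons c₀ cs) =
      fun x => a₀ * ((1 - x) ^ b₀ * log (1 / (1 - x)) ^ c₀) + r * plSum a bs cs x := by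
  ext x
  simp only [plSum, Fin.sum_univ_succ, Fin.cons_zero, Fin.cons_succ, Rat.cast_mul, Finset.mul_sum,
    mul_assoc]

lemma hasDerivAt_plSum_single (b : ℕ) {x : ℝ} (hx : x ≠ 1) :
    HasDerivAt (plSum ![-1 / (b + 1)] ![b + 1] ![0]) ((1 - x) ^ b) x := by
  have h := (hasDerivAt_one_sub_pow_succ_mul_log_pow b 0 hx).const_mul (-1 / (b + 1) : ℝ)
  have hb : (b + 1 : ℝ) ≠ 0 := by positivity
  have hfun : plSum ![-1 / (b + 1)] ![b + 1] ![0] =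
      fun x => (-1 / (b + 1) : ℝ) * ((1 - x) ^ (b + 1) * log (1 / (1 - x)) ^ 0) := by
    ext x
    simp [plSum]
  rw [hfun]
  refine h.congr_deriv ?_
  field_simp
  simp

lemma hasDerivAt_plSum_cons {m b c : ℕ} {a : Fin m → ℚ} {bs cs : Fin m → ℕ} {x : ℝ} (hx : x ≠ 1)
    (h : HasDerivAt (plSum a bs cs) ((1 - x) ^ b * log (1 / (1 - x)) ^ c) x) :
    HasDerivAt
      (plSum (Fin.cons (-1 / (b + 1)) fun i => (c + 1) / (b + 1) * a i) (Fin.cons (b + 1) bs)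
        (Fin.cons (c + 1) cs))
      ((1 - x) ^ b * log (1 / (1 - x)) ^ (c + 1)) x := by
  have hterm := (hasDerivAt_one_sub_pow_succ_mul_log_pow b (c + 1) hx).const_mul (-1 / (b + 1) : ℝ)
  have hb : (b + 1 : ℝ) ≠ 0 := by positivity
  rw [plSum_cons]
  push_cast
  refine (hterm.fun_add (h.const_mul ((c + 1) / (b + 1) : ℝ))).congr_deriv ?_
  field_simp
  push_cast
  ring

theorem exists_plSum_hasDerivAt_one_sub_pow_mul_log_pow (b c : ℕ) :
    ∃ (m : ℕ) (a : Fin m → ℚ) (bs cs : Fin m → ℕ),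
      (∀ x ≠ (1 : ℝ), HasDerivAt (plSum a bs cs) ((1 - x) ^ b * log (1 / (1 - x)) ^ c) x) ∧
      ∀ i, (a i).den ∈ (b + 2).smoothNumbers := by
  induction c with
  | zero =>
    refine ⟨1, ![-1 / (b + 1)], ![b + 1], ![0],
      fun x hx => by simpa using hasDerivAt_plSum_single b hx, fun i => ?_⟩
    simpa using den_intCast_div_succ_mem_smoothNumbers (-1) b
  | succ c ih =>
    obtain ⟨m, a, bs, cs, hderiv, hden⟩ := ih
    refine ⟨m + 1, _, _, _, fun x hx => hasDerivAt_plSum_cons hx (hderiv x hx), ?_⟩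
    refine Fin.cases ?_ fun i => ?_
    · simpa using den_intCast_div_succ_mem_smoothNumbers (-1) b
    · have hc := den_intCast_div_succ_mem_smoothNumbers (c + 1) b
      push_cast at hc
      simpa using Rat.den_mul_mem_smoothNumbers hc (hden i)

theorem stmt_17 (b c : ℕ) :
    ∃ (m : ℕ) (a : Fin m → ℚ) (bs cs : Fin m → ℕ),
      (∀ x ∈ Set.Ioo (0:ℝ) 1,
        HasDerivAt
          (fun x : ℝ => ∑ i : Fin m,
            (a i : ℝ) * (1 - x) ^ (bs i) * (Real.log (1 / (1 - x))) ^ (cs i))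
          ((1 - x) ^ b * (Real.log (1 / (1 - x))) ^ c) x) ∧
      (∀ i : Fin m, ∀ p : ℕ, p.Prime → p ∣ (a i).den → p ≤ b + 1) := by
  obtain ⟨m, a, bs, cs, hderiv, hden⟩ := exists_plSum_hasDerivAt_one_sub_pow_mul_log_pow b c
  refine ⟨m, a, bs, cs, fun x hx => hderiv x hx.2.ne, fun i p hp hpd => ?_⟩
  exact Nat.lt_succ_iff.mp (Nat.mem_smoothNumbers'.mp (hden i) p hp hpd)
end

section
/- Let α₀ ∈ (0,1) satisfy α₀ + α₀·log(2/α₀) = 1. For any γ ∈ (0, α₀], and any m ≥ 2, Σ_{μ ≤ γ·log m} (2^μ/(μ−1)!)·(log m + 1)^{μ−1}/m ≤ γ²·e^γ·(log m)·m^{g(γ)}, where g(γ) = γ + γ·log(2/γ) − 1 < 0 for γ < α₀; in particular the left side tends to 0 as m → ∞ when γ < α₀. -/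
/-! Each term is rewritten as `μ/(L+1) · (2(L+1))^μ/μ!` with `L = log m`. By
`μ! ≥ (μ/e)^μ`, `(2(L+1))^μ/μ! ≤ (2e(L+1)/μ)^μ = exp (μ log (2e(L+1)/μ))`, and
`x ↦ x log (c/x)` increases on `(0, c/e]`, so `μ` may be replaced by `γL`; then
`log (1 + 1/L) ≤ 1/L` costs a factor `e^γ` and `(2e/γ)^(γL) = m^(g γ + 1)`. There are at
most `γL` terms. For `g γ < 0`, note that `g α + 1 = α log (2e/α)`, which is strictly
increasing on `(0, 2]` and equals `1` at `α₀`. -/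

open Filter Real
open scoped Nat

theorem strictMonoOn_mul_log_div (c : ℝ) :
    StrictMonoOn (fun x => x * log (c / x)) (Set.Ioc 0 (c / exp 1)) := by
  rintro a ⟨ha, -⟩ b ⟨hb, hbc⟩ hab
  have hc : 0 < c := by
    have := hb.trans_le hbc
    rwa [div_pos_iff_of_pos_right (exp_pos 1)] at this
  have hlog_split : log (c / a) = log (c / b) + log (b / a) := by
    rw [← log_mul (by positivity) (by positivity)]
    congr 1
    field_simp
  have hlog_ba : a * log (b / a) < b - a := by
    calc a * log (b / a) < a * (b / a - 1) :=
          mul_lt_mul_of_pos_left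
            (log_lt_sub_one_of_pos (by positivity) (div_ne_one_of_ne hab.ne')) ha
      _ = b - a := by field_simp
  have hlog_cb : 1 ≤ log (c / b) := by
    rw [le_log_iff_exp_le (by positivity), le_div_iff₀ hb, mul_comm]
    rwa [le_div_iff₀ (exp_pos 1)] at hbc
  show a * log (c / a) < b * log (c / b)
  rw [hlog_split]
  nlinarith [mul_le_mul_of_nonneg_left hlog_cb (sub_nonneg.2 hab.le)]

theorem pow_div_factorial_le_mul_div_pow {x : ℝ} (hx : 0 ≤ x) (n : ℕ) :
    x ^ n / n ! ≤ (exp 1 * x / n) ^ n := by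
  have hnn : (n : ℝ) ^ n ≠ 0 := by
    rcases n.eq_zero_or_pos with rfl | hn
    · simp
    · positivity
  calc x ^ n / n ! = (n : ℝ) ^ n / n ! * (x / n) ^ n := by
        rw [div_pow]; field_simp
    _ ≤ exp n * (x / n) ^ n := by
        gcongr
        exact pow_div_factorial_le_exp _ (Nat.cast_nonneg n) n
    _ = (exp 1 * x / n) ^ n := by rw [← exp_one_pow, mul_div_assoc, mul_pow]

theorem pow_div_factorial_le_exp_mul_log {x y : ℝ} {n : ℕ} (hn : 0 < n) (hny : n ≤ y)
    (hyx : y ≤ x) : x ^ n / n ! ≤ exp (y * log (exp 1 * x / y)) := by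
  have hx : 0 < x := by
    have : (0 : ℝ) < n := by exact_mod_cast hn
    linarith
  have hset : Set.Ioc 0 (exp 1 * x / exp 1) = Set.Ioc 0 x := by
    rw [mul_div_cancel_left₀ _ (exp_pos 1).ne']
  have hmono := (strictMonoOn_mul_log_div (exp 1 * x)).monotoneOn
  rw [hset] at hmono
  calc x ^ n / n ! ≤ (exp 1 * x / n) ^ n := pow_div_factorial_le_mul_div_pow hx.le n
    _ = exp (n * log (exp 1 * x / n)) := by
        rw [← exp_log (by positivity : 0 < exp 1 * x / n), ← exp_nat_mul, log_exp]
    _ ≤ exp (y * log (exp 1 * x / y)) :=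
        exp_le_exp.2 <| hmono ⟨Nat.cast_pos.2 hn, hny.trans hyx⟩
          ⟨(Nat.cast_pos.2 hn).trans_le hny, hyx⟩ hny

theorem pow_succ_div_factorial_mul_pow (a : ℝ) {y : ℝ} (hy : y ≠ 0) (k : ℕ) :
    a ^ (k + 1) / k ! * y ^ k = (k + 1) / y * ((a * y) ^ (k + 1) / (k + 1)!) := by
  push_cast [Nat.factorial_succ]
  field_simp
  ring

theorem mul_log_mul_succ_div_le {a t L : ℝ} (ha : 0 < a) (ht : 0 < t) (hL : 0 < L) :
    t * L * log (a * (L + 1) / (t * L)) ≤ t * L * log (a / t) + t := by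
  have hsplit : log (a * (L + 1) / (t * L)) = log (a / t) + log ((L + 1) / L) := by
    rw [← log_mul (by positivity) (by positivity)]
    congr 1
    field_simp
  have hlog : log ((L + 1) / L) ≤ 1 / L := by
    calc log ((L + 1) / L) ≤ (L + 1) / L - 1 := log_le_sub_one_of_pos (by positivity)
      _ = 1 / L := by field_simp; ring
  rw [hsplit, mul_add]
  calc t * L * log (a / t) + t * L * log ((L + 1) / L)
      ≤ t * L * log (a / t) + t * L * (1 / L) := by gcongr
    _ = t * L * log (a / t) + t := by field_simp

theorem two_pow_succ_div_factorial_mul_pow_le {γ L : ℝ} (hγ : 0 < γ) (hγ2 : γ ≤ 2)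
    (hL : 0 < L) {k : ℕ} (hk : (k : ℝ) + 1 ≤ γ * L) :
    2 ^ (k + 1) / k ! * (L + 1) ^ k ≤ γ * exp γ * exp (γ * L * log (2 * exp 1 / γ)) := by
  have hkL : ((k : ℝ) + 1) / (L + 1) ≤ γ := by
    rw [div_le_iff₀ (by positivity)]
    nlinarith
  have hfactorial := pow_div_factorial_le_exp_mul_log (x := 2 * (L + 1)) k.succ_pos
    (by push_cast; exact hk) (by nlinarith)
  have hlog := mul_log_mul_succ_div_le (a := 2 * exp 1) (by positivity) hγ hL
  rw [show exp 1 * (2 * (L + 1)) = 2 * exp 1 * (L + 1) by ring] at hfactorial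
  calc 2 ^ (k + 1) / k ! * (L + 1) ^ k
      = (k + 1) / (L + 1) * ((2 * (L + 1)) ^ (k + 1) / (k + 1)!) :=
        pow_succ_div_factorial_mul_pow 2 (by positivity) k
    _ ≤ γ * exp (γ * L * log (2 * exp 1 * (L + 1) / (γ * L))) := by gcongr
    _ ≤ γ * exp (γ * L * log (2 * exp 1 / γ) + γ) := by gcongr
    _ = γ * exp γ * exp (γ * L * log (2 * exp 1 / γ)) := by rw [exp_add]; ring

theorem sum_two_pow_div_factorial_mul_pow_le {γ m : ℝ} (hγ : 0 < γ) (hγ2 : γ ≤ 2)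
    (hm : 1 < m) :
    ∑ μ ∈ Finset.Icc 1 ⌊γ * log m⌋₊, 2 ^ μ / (μ - 1)! * (log m + 1) ^ (μ - 1) / m ≤
      γ ^ 2 * exp γ * log m * m ^ (γ * log (2 * exp 1 / γ) - 1) := by
  have hm0 : 0 < m := zero_lt_one.trans hm
  have hL : 0 < log m := log_pos hm
  have hterm : ∀ μ ∈ Finset.Icc 1 ⌊γ * log m⌋₊,
      2 ^ μ / (μ - 1)! * (log m + 1) ^ (μ - 1) / m ≤
        γ * exp γ * m ^ (γ * log (2 * exp 1 / γ) - 1) := by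
    intro μ hμ
    obtain ⟨hμ1, hμγ⟩ := Finset.mem_Icc.1 hμ
    obtain ⟨k, rfl⟩ : ∃ k, μ = k + 1 := ⟨μ - 1, by omega⟩
    have hk : (k : ℝ) + 1 ≤ γ * log m := by
      exact_mod_cast (Nat.le_floor_iff (by positivity)).1 hμγ
    rw [Nat.add_sub_cancel]
    calc 2 ^ (k + 1) / k ! * (log m + 1) ^ k / m
        ≤ γ * exp γ * exp (γ * log m * log (2 * exp 1 / γ)) / m := by
          gcongr ?_ / _
          exact two_pow_succ_div_factorial_mul_pow_le hγ hγ2 hL hk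
      _ = γ * exp γ * m ^ (γ * log (2 * exp 1 / γ) - 1) := by
          rw [rpow_sub_one hm0.ne', rpow_def_of_pos hm0, mul_left_comm, ← mul_assoc,
            mul_div_assoc]
  calc _ ≤ (Finset.Icc 1 ⌊γ * log m⌋₊).card •
        (γ * exp γ * m ^ (γ * log (2 * exp 1 / γ) - 1)) :=
        Finset.sum_le_card_nsmul _ _ _ hterm
    _ ≤ γ * log m * (γ * exp γ * m ^ (γ * log (2 * exp 1 / γ) - 1)) := by
        rw [Nat.card_Icc, Nat.add_sub_cancel, nsmul_eq_mul]
        gcongr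
        exact Nat.floor_le (by positivity)
    _ = γ ^ 2 * exp γ * log m * m ^ (γ * log (2 * exp 1 / γ) - 1) := by ring

theorem tendsto_log_mul_rpow_atTop {r : ℝ} (hr : r < 0) :
    Tendsto (fun x => log x * x ^ r) atTop (nhds 0) :=
  (isLittleO_log_rpow_atTop (neg_pos.2 hr)).tendsto_div_nhds_zero.congr' <|
    (eventually_gt_atTop 0).mono fun x hx => by rw [rpow_neg hx.le, div_inv_eq_mul]

theorem add_mul_log_two_div {α : ℝ} (hα : 0 < α) :
    α + α * log (2 / α) = α * log (2 * exp 1 / α) := by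
  rw [mul_div_right_comm, log_mul (by positivity) (exp_pos 1).ne', log_exp]
  ring

theorem add_mul_log_two_div_lt {α β : ℝ} (hα : 0 < α) (hαβ : α < β) (hβ : β ≤ 2) :
    α + α * log (2 / α) < β + β * log (2 / β) := by
  have hmem : ∀ x ≤ 2, 0 < x → x ∈ Set.Ioc 0 (2 * exp 1 / exp 1) := fun x hx2 hx =>
    ⟨hx, by rwa [mul_div_cancel_right₀ _ (exp_pos 1).ne']⟩
  rw [add_mul_log_two_div hα, add_mul_log_two_div (hα.trans hαβ)]
  exact strictMonoOn_mul_log_div (2 * exp 1) (hmem α (hαβ.le.trans hβ) hα)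
    (hmem β hβ (hα.trans hαβ)) hαβ

theorem stmt_19 (α₀ : ℝ) (hα₀ : α₀ ∈ Set.Ioo (0:ℝ) 1)
    (hroot : α₀ + α₀ * Real.log (2 / α₀) = 1)
    (γ : ℝ) (hγ : 0 < γ) (hγα : γ ≤ α₀) :
    let g : ℝ → ℝ := fun α => α + α * Real.log (2 / α) - 1
    let S : ℕ → ℝ := fun m =>
      ∑ μ ∈ Finset.Icc 1 ⌊γ * Real.log m⌋₊,
        (2 : ℝ) ^ μ / (Nat.factorial (μ - 1) : ℝ) * (Real.log m + 1) ^ (μ - 1) / m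
    (∀ m : ℕ, 2 ≤ m →
        S m ≤ γ ^ 2 * Real.exp γ * Real.log m * (m : ℝ) ^ (g γ)) ∧
      (γ < α₀ → g γ < 0 ∧ Tendsto S atTop (nhds 0)) := by
  intro g S
  have hγ2 : γ ≤ 2 := by linarith [hα₀.2]
  have hgγ : g γ = γ * log (2 * exp 1 / γ) - 1 := by simp only [g, add_mul_log_two_div hγ]
  have hbound : ∀ m : ℕ, 2 ≤ m → S m ≤ γ ^ 2 * exp γ * log m * (m : ℝ) ^ (g γ) := by
    intro m hm
    rw [hgγ]
    exact sum_two_pow_div_factorial_mul_pow_le hγ hγ2 (by exact_mod_cast hm)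
  refine ⟨hbound, fun hlt => ?_⟩
  have hg : g γ < 0 := by
    have := add_mul_log_two_div_lt hγ hlt (by linarith [hα₀.2])
    simp only [g]
    linarith
  refine ⟨hg, ?_⟩
  have hlim :
      Tendsto (fun m : ℕ => γ ^ 2 * exp γ * (log m * (m : ℝ) ^ (g γ))) atTop (nhds 0) := by
    simpa using ((tendsto_log_mul_rpow_atTop hg).comp tendsto_natCast_atTop_atTop).const_mul
      (γ ^ 2 * exp γ)
  refine squeeze_zero' (Eventually.of_forall fun m => ?_)
    ((eventually_ge_atTop 2).mono fun m hm => (hbound m hm).trans_eq (mul_assoc _ _ _)) hlim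
  positivity
end
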